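/- arXiv:1101.0373 — 5 statements merged into one kernel-verified Lean document; each statement's English description precedes it below -/
import Mathlib

section
/- Let L be a selfadjoint operator in a Hilbert space H that is bounded below, and let A ⊆ H be a total subset of H (i.e., the linear span of A is dense). Then the infimum of the spectrum of L satisfies E0(L) = inf { inf supp(ρ_u) : u ∈ A, u ≠ 0 }, where ρ_u denotes the spectral measure of u with respect to L. -/
/-!
Every `ρ_u` lives on `[E0, ∞)`, which gives `E0 ≤ inf`. Conversely, suppose every `ρ_u` with
`u ∈ A` gives no mass to `(-∞, c)`. Since `‖e^{-tL} f‖² = ∫ e^{-2ts} dρ_f(s)`, a measure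
`ρ_f` vanishes on `(-∞, c)` exactly when `‖e^{-tL} f‖ = O(e^{-tc})` (one direction by Markov's
inequality), and the latter condition defines a subspace. So it holds on the span of `A`, where
it even yields the closed bound `‖e^{-L} f‖ ≤ e^{-c} ‖f‖`; by density this bound holds on all
of `H`, so `e^{-E0} = ‖e^{-L}‖ ≤ e^{-c}`, i.e. `c ≤ E0`.
-/

open MeasureTheory Filter Topology
open scoped InnerProductSpace ENNReal

noncomputable section

/-- The infimum of the topological support of a Borel measure on `ℝ`, following the paper's
definition: `supp μ = {E : ∀ δ > 0, μ(E - δ, E + δ) > 0}`. -/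
def suppInf (μ : Measure ℝ) : ℝ :=
  sInf {E : ℝ | ∀ δ > 0, 0 < μ (Set.Ioo (E - δ) (E + δ))}

/-- `T` is the heat semigroup `(e^{-tL})_{t ≥ 0}` of a selfadjoint operator `L` in `H` that is
bounded below, where `ρ f` is the spectral measure of `f` with respect to `L` (the finite Borel
measure supported in `[E0, ∞)` with `⟪f, e^{-tL} f⟫ = ∫ e^{-ts} dρ_f(s)` for all `t ≥ 0`),
and `E0` is the infimum of the spectrum of `L` (equivalently, `‖e^{-tL}‖ = e^{-t·E0}`). -/
structure IsHeatSemigroupOf {H : Type*} [NormedAddCommGroup H] [InnerProductSpace ℝ H]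
    [CompleteSpace H] (T : ℝ → H →L[ℝ] H) (ρ : H → Measure ℝ) (E0 : ℝ) : Prop where
  symm : ∀ t : ℝ, 0 ≤ t → ∀ f g : H, ⟪T t f, g⟫_ℝ = ⟪f, T t g⟫_ℝ
  map_zero : T 0 = 1
  semigroup : ∀ s t : ℝ, 0 ≤ s → 0 ≤ t → T (s + t) = T s ∘L T t
  finite : ∀ f : H, ρ f Set.univ ≠ ⊤
  support_bddBelow : ∀ f : H, ρ f (Set.Iio E0) = 0
  inner_eq : ∀ (f : H) (t : ℝ), 0 ≤ t → ⟪f, T t f⟫_ℝ = ∫ s, Real.exp (-(t * s)) ∂(ρ f)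
  norm_eq : ∀ t : ℝ, 0 ≤ t → ‖T t‖ = Real.exp (-(t * E0))

open Real Set Asymptotics

section SupportInf

variable {μ : Measure ℝ}

def supp (μ : Measure ℝ) : Set ℝ :=
  {E : ℝ | ∀ δ > 0, 0 < μ (Ioo (E - δ) (E + δ))}

lemma measure_eq_zero_of_forall_notMem_supp {s : Set ℝ} (h : ∀ x ∈ s, x ∉ supp μ) :
    μ s = 0 :=
  measure_null_of_locally_null s fun x hx => by
    obtain ⟨δ, hδ, hnull⟩ : ∃ δ > 0, ¬0 < μ (Ioo (x - δ) (x + δ)) := by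
      simpa [supp] using h x hx
    exact ⟨_, mem_nhdsWithin_of_mem_nhds
      (Ioo_mem_nhds (sub_lt_self x hδ) (lt_add_of_pos_right x hδ)),
      nonpos_iff_eq_zero.1 (not_lt.1 hnull)⟩

lemma supp_nonempty (hμ : μ ≠ 0) : (supp μ).Nonempty := by
  by_contra h
  exact hμ (Measure.measure_univ_eq_zero.1
    (measure_eq_zero_of_forall_notMem_supp fun x _ hx => h ⟨x, hx⟩))

lemma mem_lowerBounds_supp {c : ℝ} (hc : μ (Iio c) = 0) : c ∈ lowerBounds (supp μ) := by
  intro E hE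
  by_contra! hEc
  have hnull : μ (Ioo (E - (c - E)) (E + (c - E))) = 0 :=
    measure_mono_null (fun s hs => by simp only [mem_Ioo, mem_Iio] at hs ⊢; linarith) hc
  exact (hE (c - E) (by linarith)).ne' hnull

lemma le_suppInf (hμ : μ ≠ 0) {c : ℝ} (hc : μ (Iio c) = 0) : c ≤ suppInf μ :=
  le_csInf (supp_nonempty hμ) (mem_lowerBounds_supp hc)

lemma measure_Iio_suppInf {c : ℝ} (hc : μ (Iio c) = 0) : μ (Iio (suppInf μ)) = 0 :=
  measure_eq_zero_of_forall_notMem_supp fun _ hx =>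
    notMem_of_lt_csInf hx ⟨c, mem_lowerBounds_supp hc⟩

end SupportInf

section LaplaceTransform

variable {μ : Measure ℝ}

lemma ae_le_of_measure_Iio {c : ℝ} (hc : μ (Iio c) = 0) : ∀ᵐ s ∂μ, c ≤ s := by
  filter_upwards [measure_eq_zero_iff_ae_notMem.1 hc] with s hs using not_lt.1 hs

variable [IsFiniteMeasure μ]

lemma integrable_exp_neg_mul {a t : ℝ} (ha : μ (Iio a) = 0) (ht : 0 ≤ t) :
    Integrable (fun s => exp (-(t * s))) μ := by
  refine (integrable_const (exp (-(t * a)))).mono' (by fun_prop) ?_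
  filter_upwards [ae_le_of_measure_Iio ha] with s hs
  rw [norm_of_nonneg (exp_pos _).le, exp_le_exp]
  nlinarith

lemma integral_exp_neg_mul_le {c t : ℝ} (hc : μ (Iio c) = 0) (ht : 0 ≤ t) :
    ∫ s, exp (-(t * s)) ∂μ ≤ exp (-(t * c)) * μ.real univ := by
  calc ∫ s, exp (-(t * s)) ∂μ ≤ ∫ _, exp (-(t * c)) ∂μ := by
        refine integral_mono_ae (integrable_exp_neg_mul hc ht) (integrable_const _) ?_
        filter_upwards [ae_le_of_measure_Iio hc] with s hs
        rw [exp_le_exp]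
        nlinarith
    _ = exp (-(t * c)) * μ.real univ := by rw [integral_const, smul_eq_mul, mul_comm]

lemma exp_mul_measureReal_Iio_le_integral {a E t : ℝ} (ha : μ (Iio a) = 0) (ht : 0 ≤ t) :
    exp (-(t * E)) * μ.real (Iio E) ≤ ∫ s, exp (-(t * s)) ∂μ := by
  have hsub : Iio E ⊆ {s | exp (-(t * E)) ≤ exp (-(t * s))} := fun s hs => by
    rw [mem_ofPred_eq, exp_le_exp]
    nlinarith [mem_Iio.1 hs]
  refine le_trans ?_ (mul_meas_ge_le_integral_of_nonneg
    (Eventually.of_forall fun s => (exp_pos _).le) (integrable_exp_neg_mul ha ht) (exp (-(t * E))))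
  exact mul_le_mul_of_nonneg_left (measureReal_mono hsub) (exp_pos _).le

lemma measure_Iio_eq_zero_of_integral_exp_le {a c C : ℝ} (ha : μ (Iio a) = 0)
    (hdecay : ∀ᶠ t in atTop, ∫ s, exp (-(t * s)) ∂μ ≤ C * exp (-(t * c))) :
    μ (Iio c) = 0 := by
  -- Markov's inequality for `s ↦ e^{-ts}` gives `μ (-∞, E) ≤ C e^{-t(c - E)} → 0`.
  have below : ∀ E < c, μ (Iio E) = 0 := by
    intro E hE
    have hlim : Tendsto (fun t => C * exp (-(t * (c - E)))) atTop (𝓝 0) := by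
      simpa using (tendsto_exp_atBot.comp
        (tendsto_neg_atTop_atBot.comp (tendsto_id.atTop_mul_const (sub_pos.2 hE)))).const_mul C
    have hle : μ.real (Iio E) ≤ 0 := by
      refine ge_of_tendsto hlim ?_
      filter_upwards [hdecay, eventually_ge_atTop 0] with t hbound ht
      have hmarkov := (exp_mul_measureReal_Iio_le_integral (E := E) ha ht).trans hbound
      rw [show -(t * (c - E)) = -(t * c) - -(t * E) by ring, exp_sub, ← mul_div_assoc,
        le_div_iff₀ (exp_pos _), mul_comm]
      exact hmarkov
    exact (measureReal_eq_zero_iff).1 (le_antisymm hle measureReal_nonneg)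
  refine measure_eq_zero_of_forall_notMem_supp fun x (hx : x < c) hsupp => ?_
  have hnull := below (x + (c - x) / 2) (by linarith)
  exact (hsupp ((c - x) / 2) (by linarith)).ne' (measure_mono_null (fun s hs => hs.2) hnull)

end LaplaceTransform

section ExpDecay

variable {H : Type*} [NormedAddCommGroup H] [InnerProductSpace ℝ H]

def expDecaySubmodule (T : ℝ → H →L[ℝ] H) (c : ℝ) : Submodule ℝ H where
  carrier := {f | (fun t => T t f) =O[atTop] fun t => exp (-(t * c))}
  zero_mem' := by simpa only [mem_ofPred_eq, map_zero] using isBigO_zero _ _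
  add_mem' {f g} hf hg := by simpa only [mem_ofPred_eq, map_add] using hf.add hg
  smul_mem' a f hf := by
    simpa only [mem_ofPred_eq, map_smul, Pi.smul_def] using hf.const_smul_left a

lemma mem_expDecaySubmodule {T : ℝ → H →L[ℝ] H} {c : ℝ} {f : H} :
    f ∈ expDecaySubmodule T c ↔ (fun t => T t f) =O[atTop] fun t => exp (-(t * c)) :=
  Iff.rfl

end ExpDecay

namespace IsHeatSemigroupOf

variable {H : Type*} [NormedAddCommGroup H] [InnerProductSpace ℝ H] [CompleteSpace H]
  {T : ℝ → H →L[ℝ] H} {ρ : H → Measure ℝ} {E0 : ℝ}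

lemma isFiniteMeasure (hT : IsHeatSemigroupOf T ρ E0) (f : H) : IsFiniteMeasure (ρ f) :=
  ⟨lt_top_iff_ne_top.2 (hT.finite f)⟩

lemma measureReal_univ (hT : IsHeatSemigroupOf T ρ E0) (f : H) :
    (ρ f).real univ = ‖f‖ ^ 2 := by
  simpa [hT.map_zero, real_inner_self_eq_norm_sq] using (hT.inner_eq f 0 le_rfl).symm

lemma measure_eq_zero_iff (hT : IsHeatSemigroupOf T ρ E0) {f : H} : ρ f = 0 ↔ f = 0 := by
  have := hT.isFiniteMeasure f
  rw [← Measure.measure_univ_eq_zero, ← measureReal_eq_zero_iff, hT.measureReal_univ]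
  simp

/-- By symmetry and the semigroup law, `‖e^{-tL} f‖² = ⟪f, e^{-2tL} f⟫`. -/
lemma norm_apply_sq (hT : IsHeatSemigroupOf T ρ E0) {t : ℝ} (ht : 0 ≤ t) (f : H) :
    ‖T t f‖ ^ 2 = ∫ s, exp (-(2 * t * s)) ∂(ρ f) := by
  rw [← hT.inner_eq f _ (by positivity), two_mul, hT.semigroup t t ht ht,
    ContinuousLinearMap.comp_apply, ← hT.symm t ht, real_inner_self_eq_norm_sq]

lemma norm_apply_le (hT : IsHeatSemigroupOf T ρ E0) {c t : ℝ} (ht : 0 ≤ t) {f : H}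
    (hf : ρ f (Iio c) = 0) : ‖T t f‖ ≤ exp (-(t * c)) * ‖f‖ := by
  have := hT.isFiniteMeasure f
  refine pow_le_pow_iff_left₀ (norm_nonneg _) (by positivity) two_ne_zero |>.1 ?_
  calc ‖T t f‖ ^ 2 ≤ exp (-(2 * t * c)) * (ρ f).real univ := by
        rw [hT.norm_apply_sq ht]; exact integral_exp_neg_mul_le hf (by positivity)
    _ = (exp (-(t * c)) * ‖f‖) ^ 2 := by
        rw [hT.measureReal_univ, mul_pow, ← exp_nat_mul]; ring_nf

lemma mem_expDecaySubmodule_iff (hT : IsHeatSemigroupOf T ρ E0) {c : ℝ} {f : H} :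
    f ∈ expDecaySubmodule T c ↔ ρ f (Iio c) = 0 := by
  have := hT.isFiniteMeasure f
  refine ⟨fun hf => ?_, fun hf => ?_⟩
  · obtain ⟨C, hC⟩ := (mem_expDecaySubmodule.1 hf).bound
    refine measure_Iio_eq_zero_of_integral_exp_le (C := C ^ 2) (hT.support_bddBelow f) ?_
    filter_upwards [(tendsto_id.atTop_div_const two_pos).eventually hC,
      eventually_ge_atTop 0] with t hbound ht
    have hsq := pow_le_pow_left₀ (norm_nonneg _) hbound 2
    rw [id, hT.norm_apply_sq (by positivity), mul_div_cancel₀ t two_ne_zero,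
      norm_of_nonneg (exp_pos _).le, mul_pow, ← exp_nat_mul] at hsq
    rwa [show ((2 : ℕ) : ℝ) * -(t / 2 * c) = -(t * c) by push_cast; ring] at hsq
  · refine mem_expDecaySubmodule.2 (IsBigO.of_bound ‖f‖ ?_)
    filter_upwards [eventually_ge_atTop 0] with t ht
    rw [norm_of_nonneg (exp_pos _).le, mul_comm]
    exact hT.norm_apply_le ht hf

lemma le_of_forall_measure_Iio_eq_zero (hT : IsHeatSemigroupOf T ρ E0) {A : Set H}
    (hA : Dense (Submodule.span ℝ A : Set H)) {c : ℝ} (hc : ∀ u ∈ A, ρ u (Iio c) = 0) :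
    c ≤ E0 := by
  have hspan : Submodule.span ℝ A ≤ expDecaySubmodule T c :=
    Submodule.span_le.2 fun u hu => hT.mem_expDecaySubmodule_iff.2 (hc u hu)
  have hbound : ∀ g : H, ‖T 1 g‖ ≤ exp (-(1 * c)) * ‖g‖ := by
    refine fun g => closure_minimal (t := {g | ‖T 1 g‖ ≤ exp (-(1 * c)) * ‖g‖}) (fun f hf => ?_)
      (isClosed_le (by fun_prop) (by fun_prop)) (hA g)
    exact hT.norm_apply_le zero_le_one (hT.mem_expDecaySubmodule_iff.1 (hspan hf))
  have hnorm := (hT.norm_eq 1 zero_le_one).symm.trans_le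
    ((T 1).opNorm_le_bound (exp_pos _).le hbound)
  rw [exp_le_exp] at hnorm
  linarith

end IsHeatSemigroupOf

/-- Let `L` be a selfadjoint operator in a Hilbert space `H` that is bounded
below, and let `A ⊆ H` be a total subset (i.e., the linear span of `A` is dense in `H`). Then
the infimum of the spectrum of `L` satisfies
`E0(L) = inf { inf supp(ρ_u) : u ∈ A, u ≠ 0 }`. -/
theorem statement3 {H : Type*} [NormedAddCommGroup H] [InnerProductSpace ℝ H] [CompleteSpace H]
    (T : ℝ → H →L[ℝ] H) (ρ : H → Measure ℝ) (E0 : ℝ)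
    (hT : IsHeatSemigroupOf T ρ E0)
    (A : Set H)
    (hA : Dense (Submodule.span ℝ A : Set H)) :
    E0 = sInf ((fun u => suppInf (ρ u)) '' {u ∈ A | u ≠ 0}) := by
  set S := (fun u => suppInf (ρ u)) '' {u ∈ A | u ≠ 0}
  have hE0_le : ∀ b ∈ S, E0 ≤ b := by
    rintro _ ⟨u, ⟨-, hu⟩, rfl⟩
    exact le_suppInf (hT.measure_eq_zero_iff.not.2 hu) (hT.support_bddBelow u)
  have hnonempty : S.Nonempty := by
    by_contra hS
    have hA0 : ∀ u ∈ A, u = 0 := fun u hu => by_contra fun hu0 => hS ⟨_, ⟨u, ⟨hu, hu0⟩, rfl⟩⟩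
    have : E0 + 1 ≤ E0 := hT.le_of_forall_measure_Iio_eq_zero hA fun u hu => by
      simp [hT.measure_eq_zero_iff.2 (hA0 u hu)]
    linarith
  refine le_antisymm (le_csInf hnonempty hE0_le)
    (hT.le_of_forall_measure_Iio_eq_zero hA fun u hu => ?_)
  rcases eq_or_ne u 0 with rfl | hu0
  · simp [hT.measure_eq_zero_iff.2 rfl]
  · exact measure_mono_null (Iio_subset_Iio (csInf_le ⟨E0, hE0_le⟩ ⟨u, ⟨hu, hu0⟩, rfl⟩))
      (measure_Iio_suppInf (hT.support_bddBelow u))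
end
end

section
/- Let L be the left shift on ℓ²(ℕ), i.e., (Lx)_k = x_{k+1}. For μ ∈ (0, 1) let y_μ := (μ^k)_{k∈ℕ} ∈ ℓ²(ℕ) and define the bounded operator L₁ on ℓ²(ℕ) by L₁ x := Lx + x₁ y_μ. Then for every λ ∈ (0, 1) with λ ≠ 2μ and every t ≥ 0, e^{tL₁} y_λ = e^{λt} y_λ + (λ/(λ − 2μ)) (e^{λt} − e^{2μt}) y_μ. -/
open Filter Topology
open scoped InnerProductSpace ENNReal

noncomputable section

/-- `ℓ²(ℕ)`; the paper indexes sequences by `ℕ = {1, 2, …}`, so the Lean index `k : ℕ`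
corresponds to the paper's index `k + 1`; in particular `x₁` is `x 0`. -/
abbrev ellTwo := lp (fun _ : ℕ => ℝ) 2

/-!
Geometric sequences are eigenvectors of the left shift: `L y_r = r y_r`. Hence
`L₁ y_μ = 2μ y_μ` and `L₁ y_λ = λ y_λ + λ y_μ`, so `L₁` leaves the plane spanned by `y_λ, y_μ`
invariant and acts there by an upper triangular matrix with distinct eigenvalues `λ ≠ 2μ`.
Its second eigenvector is `y_λ + λ/(λ - 2μ) y_μ`, and `e^{tL₁}` acts on eigenvectors by the
scalar exponential.
-/

theorem lp.shift_eq_smul_of_geometric {𝕜 : Type*} [NormedField 𝕜] {p : ℝ≥0∞}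
    {L : lp (fun _ : ℕ => 𝕜) p → lp (fun _ : ℕ => 𝕜) p} {y : lp (fun _ : ℕ => 𝕜) p} {r : 𝕜}
    (hL : ∀ k, L y k = y (k + 1)) (hy : ∀ k, y k = r ^ (k + 1)) : L y = r • y := by
  ext k
  rw [hL, lp.coeFn_smul, Pi.smul_apply, hy, hy, smul_eq_mul, pow_succ, mul_comm]

section Exponential

variable {E : Type*} [NormedAddCommGroup E] [NormedSpace ℝ E] [CompleteSpace E]

theorem exp_apply_of_apply_eq_smul {A : E →L[ℝ] E} {a : ℝ} {x : E} (h : A x = a • x) :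
    NormedSpace.exp A x = Real.exp a • x := by
  have hpow (n : ℕ) : (A ^ n) x = a ^ n • x := by
    induction n with
    | zero => simp
    | succ n ih => rw [pow_succ', mul_apply_eq_comp, ih, map_smul, h, smul_smul, pow_succ]
  have hA := (ContinuousLinearMap.apply ℝ E x).hasSum
    (NormedSpace.exp_series_hasSum_exp' (𝕂 := ℝ) A)
  have ha := (NormedSpace.exp_series_hasSum_exp' (𝕂 := ℝ) a).smul_const x
  rw [Real.exp_eq_exp_ℝ]
  refine hA.unique ?_
  convert ha using 2 with n
  simp [hpow, smul_smul]

theorem exp_smul_apply_of_apply_eq {T : E →L[ℝ] E} {a b c : ℝ} {u v : E} (hu : T u = b • u)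
    (hv : T v = a • v + c • u) (hab : a ≠ b) (t : ℝ) :
    NormedSpace.exp (t • T) v
      = Real.exp (a * t) • v + (c / (a - b) * (Real.exp (a * t) - Real.exp (b * t))) • u := by
  set d := c / (a - b)
  have hd : d * (a - b) = c := div_mul_cancel₀ c (sub_ne_zero.mpr hab)
  clear_value d
  subst hd
  have hu' : (t • T) u = (b * t) • u := by rw [smul_apply, hu, smul_smul, mul_comm]
  have hw : (t • T) (v + d • u) = (a * t) • (v + d • u) := by
    rw [smul_apply, map_add, map_smul, hu, hv, smul_smul]
    module
  calc NormedSpace.exp (t • T) v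
      = NormedSpace.exp (t • T) (v + d • u) - d • NormedSpace.exp (t • T) u := by
        rw [← map_smul, ← map_sub, add_sub_cancel_right]
    _ = _ := by
        rw [exp_apply_of_apply_eq_smul hw, exp_apply_of_apply_eq_smul hu']
        module

end Exponential

theorem statement7_general (μ : ℝ)
    (yμ : ellTwo) (hyμ : ∀ k : ℕ, yμ k = μ ^ (k + 1))
    (L : ellTwo →L[ℝ] ellTwo) (hL : ∀ (x : ellTwo) (k : ℕ), (L x) k = x (k + 1))
    (L₁ : ellTwo →L[ℝ] ellTwo) (hL₁ : ∀ x : ellTwo, L₁ x = L x + x 0 • yμ)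
    (lam : ℝ) (hne : lam ≠ 2 * μ)
    (ylam : ellTwo) (hylam : ∀ k : ℕ, ylam k = lam ^ (k + 1))
    (t : ℝ) :
    NormedSpace.exp (t • L₁) ylam
      = Real.exp (lam * t) • ylam
        + (lam / (lam - 2 * μ) * (Real.exp (lam * t) - Real.exp (2 * μ * t))) • yμ := by
  have hLμ := lp.shift_eq_smul_of_geometric (hL yμ) hyμ
  have hLlam := lp.shift_eq_smul_of_geometric (hL ylam) hylam
  have hL₁μ : L₁ yμ = (2 * μ) • yμ := by
    rw [hL₁, hLμ, hyμ 0, zero_add, pow_one, two_mul, add_smul]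
  have hL₁lam : L₁ ylam = lam • ylam + lam • yμ := by
    rw [hL₁, hLlam, hylam 0, zero_add, pow_one]
  exact exp_smul_apply_of_apply_eq hL₁μ hL₁lam hne t

/-- Let `L` be the left shift on `ℓ²(ℕ)`, i.e., `(Lx)_k = x_{k+1}`.
For `μ ∈ (0, 1)` let `y_μ := (μ^k)_{k∈ℕ} ∈ ℓ²(ℕ)` and define the bounded operator `L₁` on
`ℓ²(ℕ)` by `L₁ x := Lx + x₁ • y_μ`. Then for every `λ ∈ (0, 1)` with `λ ≠ 2μ` and every
`t ≥ 0`, `e^{tL₁} y_λ = e^{λt} • y_λ + (λ/(λ − 2μ)) (e^{λt} − e^{2μt}) • y_μ`. -/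
theorem statement7 (μ : ℝ) (hμ : μ ∈ Set.Ioo (0 : ℝ) 1)
    (yμ : ellTwo) (hyμ : ∀ k : ℕ, yμ k = μ ^ (k + 1))
    (L : ellTwo →L[ℝ] ellTwo) (hL : ∀ (x : ellTwo) (k : ℕ), (L x) k = x (k + 1))
    (L₁ : ellTwo →L[ℝ] ellTwo) (hL₁ : ∀ x : ellTwo, L₁ x = L x + x 0 • yμ)
    (lam : ℝ) (hlam : lam ∈ Set.Ioo (0 : ℝ) 1) (hne : lam ≠ 2 * μ)
    (ylam : ellTwo) (hylam : ∀ k : ℕ, ylam k = lam ^ (k + 1))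
    (t : ℝ) (ht : 0 ≤ t) :
    NormedSpace.exp (t • L₁) ylam
      = Real.exp (lam * t) • ylam
        + (lam / (lam - 2 * μ) * (Real.exp (lam * t) - Real.exp (2 * μ * t))) • yμ :=
  statement7_general μ yμ hyμ L hL L₁ hL₁ lam hne ylam hylam t
end
end

section
/- Let L be the left shift on ℓ²(ℕ), let μ ∈ (0, 1/2), let y_μ := (μ^k)_{k∈ℕ} and define the bounded operator L₁ on ℓ²(ℕ) by L₁ x := Lx + x₁ y_μ; the semigroup (e^{tL₁})_{t≥0} is positivity improving. Then for every λ ∈ (2μ, 1) and every positive x ∈ ℓ²(ℕ), lim_{t→∞} (log⟨x, e^{tL₁} y_λ⟩)/t = λ. In particular, the limit depends on the choice of λ, so the conclusion of the selfadjoint convergence theorem fails for the non-selfadjoint generator L₁. -/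
/-!
Everything follows from the coordinate formula `(L₁ x)_k = x_{k+1} + x_1 μ^k`. It shows that `L₁`
preserves the positive cone and that `L₁^k x` is strictly positive as soon as `x_k > 0`, so every
term of the exponential series of `e^{tL₁} x` is nonnegative and one of them is positive.
It also gives `L₁ y_μ = 2μ y_μ` and `L₁ y_λ = λ y_λ + λ y_μ`, so `y_λ + c y_μ` with
`c = λ / (λ - 2μ)` is an eigenvector for `λ`. Hence
`⟪x, e^{tL₁} y_λ⟫ = e^{λt} (⟪x, y_λ + c y_μ⟫ - c ⟪x, y_μ⟫ e^{(2μ - λ)t})`, where the first inner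
product is positive and the correction decays because `λ > 2μ`.
-/

open Filter Topology
open scoped InnerProductSpace ENNReal

noncomputable section

namespace NormedSpace

variable {𝕂 E : Type*} [RCLike 𝕂] [NormedAddCommGroup E] [NormedSpace 𝕂 E] [CompleteSpace E]

theorem hasSum_exp_apply (A : E →L[𝕂] E) (x : E) :
    HasSum (fun n : ℕ => (n.factorial⁻¹ : 𝕂) • (A ^ n) x) (exp A x) :=
  (exp_series_hasSum_exp' (𝕂 := 𝕂) A).mapL (ContinuousLinearMap.apply 𝕂 E x)

theorem exp_apply_of_apply_eq_smul (A : E →L[𝕂] E) {v : E} {c : 𝕂} (h : A v = c • v) :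
    exp A v = exp c • v := by
  have hpow (n : ℕ) : (A ^ n) v = c ^ n • v := by
    induction n with
    | zero => simp
    | succ n ih => rw [pow_succ', mul_apply_eq_comp, ih, map_smul, h, smul_smul, pow_succ]
  refine (hasSum_exp_apply A v).unique ?_
  simpa only [hpow, smul_smul, smul_eq_mul] using (exp_series_hasSum_exp' (𝕂 := 𝕂) c).smul_const v

end NormedSpace

namespace lp

variable {ι : Type*} {p : ℝ≥0∞}

theorem exp_smul_apply_pos [Fact (1 ≤ p)] (A : lp (fun _ : ι => ℝ) p →L[ℝ] lp (fun _ : ι => ℝ) p)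
    {x : lp (fun _ : ι => ℝ) p} (hA : ∀ n i, 0 ≤ (A ^ n) x i) {t : ℝ} (ht : 0 < t) {m : ℕ} {i : ι}
    (hm : 0 < (A ^ m) x i) : 0 < NormedSpace.exp (t • A) x i := by
  have hsum := (NormedSpace.hasSum_exp_apply (t • A) x).mapL (evalCLM ℝ (fun _ : ι => ℝ) p i)
  have hterm (n : ℕ) : evalCLM ℝ (fun _ : ι => ℝ) p i ((n.factorial⁻¹ : ℝ) • ((t • A) ^ n) x)
      = (n.factorial⁻¹ : ℝ) * t ^ n * (A ^ n) x i := by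
    simp [evalCLM, smul_pow, mul_assoc]
  simp only [hterm] at hsum
  refine hasSum_lt (f := 0) (fun n => ?_) ?_ hasSum_zero hsum (i := m)
  · have := hA n i
    positivity
  · simp only [Pi.zero_apply]
    positivity

theorem exists_pos_apply {x : lp (fun _ : ι => ℝ) p} (hx : ∀ i, 0 ≤ x i) (hx0 : x ≠ 0) :
    ∃ i, 0 < x i := by
  by_contra! h
  exact hx0 (lp.ext (funext fun i => le_antisymm (h i) (hx i)))

theorem inner_pos {x v : lp (fun _ : ι => ℝ) 2} (hx : ∀ i, 0 ≤ x i) (hx0 : x ≠ 0)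
    (hv : ∀ i, 0 < v i) : 0 < ⟪x, v⟫_ℝ := by
  obtain ⟨i, hi⟩ := exists_pos_apply hx hx0
  rw [lp.inner_eq_tsum (𝕜 := ℝ)]
  refine (lp.summable_inner (𝕜 := ℝ) x v).tsum_pos (fun j => ?_) i ?_
  · simpa using mul_nonneg (hv j).le (hx j)
  · simpa using mul_pos (hv i) hi

end lp

theorem Real.tendsto_log_exp_mul_div_atTop {lam a : ℝ} {g : ℝ → ℝ}
    (hg : Tendsto g atTop (𝓝 a)) (ha : 0 < a) :
    Tendsto (fun t => Real.log (Real.exp (lam * t) * g t) / t) atTop (𝓝 lam) := by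
  have hlog : Tendsto (fun t => Real.log (g t) / t) atTop (𝓝 0) := by
    simpa [div_eq_mul_inv] using
      ((Real.continuousAt_log ha.ne').tendsto.comp hg).mul tendsto_inv_atTop_zero
  refine (by simpa using hlog.const_add lam : Tendsto _ _ _).congr' ?_
  filter_upwards [hg.eventually (eventually_gt_nhds ha), eventually_gt_atTop 0] with t hgt ht
  rw [Real.log_mul (Real.exp_ne_zero _) hgt.ne', Real.log_exp, add_div,
    mul_div_cancel_right₀ _ ht.ne']

/-- The coordinate form of the paper's `L₁ x = L x + x₁ y_μ`, with `L` the left shift. -/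
def IsShiftAddRankOne {p : ℝ≥0∞} [Fact (1 ≤ p)] (μ : ℝ)
    (T : lp (fun _ : ℕ => ℝ) p →L[ℝ] lp (fun _ : ℕ => ℝ) p) : Prop :=
  ∀ x k, T x k = x (k + 1) + x 0 * μ ^ (k + 1)

namespace IsShiftAddRankOne

variable {p : ℝ≥0∞} [Fact (1 ≤ p)] {μ : ℝ} {T : lp (fun _ : ℕ => ℝ) p →L[ℝ] lp (fun _ : ℕ => ℝ) p}

theorem apply_nonneg (hT : IsShiftAddRankOne μ T) (hμ : 0 ≤ μ)
    {x : lp (fun _ : ℕ => ℝ) p} (hx : ∀ k, 0 ≤ x k) (k : ℕ) : 0 ≤ T x k := by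
  rw [hT]
  have := hx (k + 1)
  have := hx 0
  positivity

theorem pow_apply_nonneg (hT : IsShiftAddRankOne μ T) (hμ : 0 ≤ μ)
    {x : lp (fun _ : ℕ => ℝ) p} (hx : ∀ k, 0 ≤ x k) (n k : ℕ) : 0 ≤ (T ^ n) x k := by
  induction n generalizing k with
  | zero => exact hx k
  | succ n ih => rw [pow_succ', mul_apply_eq_comp]; exact apply_nonneg hT hμ ih k

theorem apply_add_le_pow_apply (hT : IsShiftAddRankOne μ T) (hμ : 0 ≤ μ)
    {x : lp (fun _ : ℕ => ℝ) p} (hx : ∀ k, 0 ≤ x k) (n k : ℕ) : x (k + n) ≤ (T ^ n) x k := by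
  induction n generalizing x k with
  | zero => rfl
  | succ n ih =>
    have hshift : x (k + (n + 1)) ≤ T x (k + n) := by
      rw [hT, ← add_assoc]
      have := hx 0
      have : 0 ≤ μ ^ (k + n + 1) := by positivity
      nlinarith
    rw [pow_succ, mul_apply_eq_comp]
    exact hshift.trans (ih (apply_nonneg hT hμ hx) k)

theorem pow_apply_pos (hT : IsShiftAddRankOne μ T) (hμ : 0 < μ)
    {x : lp (fun _ : ℕ => ℝ) p} (hx : ∀ k, 0 ≤ x k) {k₀ : ℕ} (hk₀ : 0 < x k₀) (k : ℕ) :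
    0 < (T ^ (k₀ + 1)) x k := by
  have hfront : 0 < (T ^ k₀) x 0 :=
    hk₀.trans_le (by simpa using apply_add_le_pow_apply hT hμ.le hx k₀ 0)
  rw [pow_succ', mul_apply_eq_comp, hT]
  have := pow_apply_nonneg hT hμ.le hx k₀ (k + 1)
  have : 0 < μ ^ (k + 1) := by positivity
  positivity

theorem apply_geometric (hT : IsShiftAddRankOne μ T)
    {yμ : lp (fun _ : ℕ => ℝ) p} (hyμ : ∀ k, yμ k = μ ^ (k + 1))
    {lam : ℝ} {y : lp (fun _ : ℕ => ℝ) p} (hy : ∀ k, y k = lam ^ (k + 1)) :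
    T y = lam • y + lam • yμ := by
  ext k
  simp only [hT y k, hy, hyμ, lp.coeFn_add, lp.coeFn_smul, Pi.add_apply, Pi.smul_apply, smul_eq_mul]
  ring

theorem exp_smul_apply_geometric (hT : IsShiftAddRankOne μ T)
    {yμ : lp (fun _ : ℕ => ℝ) p} (hyμ : ∀ k, yμ k = μ ^ (k + 1))
    {lam : ℝ} {y : lp (fun _ : ℕ => ℝ) p} (hy : ∀ k, y k = lam ^ (k + 1)) (hlam : lam ≠ 2 * μ)
    (t : ℝ) :
    NormedSpace.exp (t • T) y = Real.exp (lam * t) • (y + (lam / (lam - 2 * μ)) • yμ)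
      - (lam / (lam - 2 * μ) * Real.exp (2 * μ * t)) • yμ := by
  set c := lam / (lam - 2 * μ)
  have hc : lam + 2 * μ * c = lam * c := by
    simp only [c]
    field_simp [sub_ne_zero.mpr hlam]
    ring
  have hTyμ : (t • T) yμ = (2 * μ * t) • yμ := by
    rw [smul_apply, apply_geometric hT hyμ hyμ]
    module
  have hTv : (t • T) (y + c • yμ) = (lam * t) • (y + c • yμ) := by
    rw [smul_apply, map_add, map_smul, apply_geometric hT hyμ hy,
      apply_geometric hT hyμ hyμ]
    linear_combination (norm := module) (t • hc) • yμ
  have hy_eq : y = (y + c • yμ) - c • yμ := by abel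
  conv_lhs => rw [hy_eq]
  rw [map_sub, map_smul, NormedSpace.exp_apply_of_apply_eq_smul _ hTv,
    NormedSpace.exp_apply_of_apply_eq_smul _ hTyμ, ← Real.exp_eq_exp_ℝ, smul_smul]

end IsShiftAddRankOne

/-- Let `L` be the left shift on `ℓ²(ℕ)`, let `μ ∈ (0, 1/2)`, let
`y_μ := (μ^k)_{k∈ℕ}` and define the bounded operator `L₁` on `ℓ²(ℕ)` by `L₁ x := Lx + x₁ • y_μ`.
Then the semigroup `(e^{tL₁})_{t≥0}` is positivity improving, and for every `λ ∈ (2μ, 1)`,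
`y_λ := (λ^k)_{k∈ℕ}`, and every positive `x ∈ ℓ²(ℕ)` (i.e. `x ≠ 0` with all entries `≥ 0`),
`lim_{t→∞} (log ⟪x, e^{tL₁} y_λ⟫)/t = λ`. In particular the limit depends on `λ`, so the
conclusion of the selfadjoint convergence theorem fails for the non-selfadjoint generator
`L₁`. -/
theorem statement8 (μ : ℝ) (hμ : μ ∈ Set.Ioo (0 : ℝ) (1 / 2))
    (yμ : ellTwo) (hyμ : ∀ k : ℕ, yμ k = μ ^ (k + 1))
    (L : ellTwo →L[ℝ] ellTwo) (hL : ∀ (x : ellTwo) (k : ℕ), (L x) k = x (k + 1))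
    (L₁ : ellTwo →L[ℝ] ellTwo) (hL₁ : ∀ x : ellTwo, L₁ x = L x + x 0 • yμ) :
    (∀ t : ℝ, 0 < t → ∀ x : ellTwo, (∀ k, 0 ≤ x k) → x ≠ 0 →
        ∀ k : ℕ, 0 < (NormedSpace.exp (t • L₁) x) k) ∧
    (∀ lam : ℝ, lam ∈ Set.Ioo (2 * μ) 1 →
      ∀ ylam : ellTwo, (∀ k : ℕ, ylam k = lam ^ (k + 1)) →
      ∀ x : ellTwo, (∀ k, 0 ≤ x k) → x ≠ 0 →
        Tendsto (fun t : ℝ => Real.log ⟪x, NormedSpace.exp (t • L₁) ylam⟫_ℝ / t)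
          atTop (𝓝 lam)) := by
  have hμ0 : 0 < μ := hμ.1
  have hT : IsShiftAddRankOne μ L₁ := fun x k => by
    rw [hL₁, lp.coeFn_add, lp.coeFn_smul, Pi.add_apply, Pi.smul_apply, hL, hyμ, smul_eq_mul]
  refine ⟨fun t ht x hx hx0 k => ?_, fun lam hlam ylam hylam x hx hx0 => ?_⟩
  · obtain ⟨k₀, hk₀⟩ := lp.exists_pos_apply hx hx0
    exact lp.exp_smul_apply_pos L₁ (IsShiftAddRankOne.pow_apply_nonneg hT hμ0.le hx) ht
      (IsShiftAddRankOne.pow_apply_pos hT hμ0 hx hk₀ k)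
  · have hlam0 : 0 < lam := by linarith [hlam.1]
    set c := lam / (lam - 2 * μ)
    have hc : 0 < c := div_pos hlam0 (sub_pos.mpr hlam.1)
    have ha : 0 < ⟪x, ylam + c • yμ⟫_ℝ := lp.inner_pos hx hx0 fun k => by
      simp only [lp.coeFn_add, lp.coeFn_smul, Pi.add_apply, Pi.smul_apply, smul_eq_mul, hylam,
        hyμ]
      positivity
    have hdecay : Tendsto (fun t => Real.exp ((2 * μ - lam) * t)) atTop (𝓝 0) :=
      Real.tendsto_exp_atBot.comp
        (tendsto_id.const_mul_atTop_of_neg (by linarith [hlam.1]))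
    refine (Real.tendsto_log_exp_mul_div_atTop (lam := lam)
      (by simpa using (hdecay.const_mul (c * ⟪x, yμ⟫_ℝ)).const_sub ⟪x, ylam + c • yμ⟫_ℝ)
      ha).congr fun t => ?_
    rw [IsShiftAddRankOne.exp_smul_apply_geometric hT hyμ hylam hlam.1.ne', inner_sub_right,
      real_inner_smul_right, real_inner_smul_right]
    have hexp : Real.exp (lam * t) * Real.exp ((2 * μ - lam) * t) = Real.exp (2 * μ * t) := by
      rw [← Real.exp_add]
      ring_nf
    congr 2
    linear_combination (-(c * ⟪x, yμ⟫_ℝ)) * hexp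
end
end

section
/- Let L be a selfadjoint operator in L²(X, m), bounded below, with E0 the infimum of the spectrum of L, and assume that the semigroup (e^{-tL})_{t≥0} has a kernel p satisfying (K1), (K2), (K3). Then there exists a unique measurable function Φ : X → [0, ∞) such that e^{tE0} p_t(x, y) → Φ(x) Φ(y) as t → ∞ for all x, y ∈ X. Moreover, if E0 is an eigenvalue of L, then Φ is a strictly positive (everywhere on X) normalized eigenfunction of L to the eigenvalue E0; if E0 is not an eigenvalue, then Φ vanishes everywhere. -/
/-!
Spectral calculus gives `e^{tE0} ⟪f, e^{-tL} f⟫ → ρ_f({E0})`, which makes `e^{tE0} e^{-tL} f`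
Cauchy; its limit lies in `ker (L - E0)`. Strict positivity of the kernel makes `|g|` an
eigenvector along with `g` (equality in `⟪g, e^{-tL} g⟫ ≤ ⟪|g|, e^{-tL} |g|⟫ ≤ e^{-tE0} ‖g‖²`) and
every nonnegative eigenvector a.e. positive, so `ker (L - E0)` is either `0` or spanned by an
a.e. positive unit vector `u`, and then `e^{tE0} e^{-tL} f → ⟪u, f⟫ u`. Since
`p_t(x, y) = ⟪p_1(x, ·), e^{-(t-2)L} p_1(·, y)⟫`, this gives `e^{tE0} p_t(x, y) → Φ(x) Φ(y)` with
`Φ(x) = e^{E0} ⟪u, p_1(x, ·)⟫`, an everywhere defined version of `u`. Uniqueness comes from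
the diagonal `x = y`.
-/

open MeasureTheory Filter Topology
open scoped InnerProductSpace ENNReal

noncomputable section

/-- `p` is a kernel of the semigroup `T = (e^{-tL})_{t>0}` on `L²(X, m)` in the sense of the
paper: a measurable function `p : (0,∞) × X × X → (0,∞)` with
`e^{-tL} f(x) = ∫ p_t(x,y) f(y) dm(y)` for a.e. `x`, satisfying (K1) symmetry,
(K2) `p_t(x,·) ∈ L²(X,m)`, and (K3) the Chapman–Kolmogorov identity. (The values of the Lean
function `p` at `t ≤ 0` are irrelevant.) -/
structure IsKernelOf {X : Type*} [MeasurableSpace X] (m : Measure X)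
    (T : ℝ → Lp ℝ 2 m →L[ℝ] Lp ℝ 2 m) (p : ℝ → X → X → ℝ) : Prop where
  meas : Measurable fun q : ℝ × X × X => p q.1 q.2.1 q.2.2
  pos : ∀ t : ℝ, 0 < t → ∀ x y : X, 0 < p t x y
  symm : ∀ t : ℝ, 0 < t → ∀ x y : X, p t x y = p t y x
  memL2 : ∀ t : ℝ, 0 < t → ∀ x : X, MemLp (p t x) 2 m
  chapman : ∀ t s : ℝ, 0 < t → 0 < s → ∀ x y : X,
      p (t + s) x y = ∫ z, p t x z * p s z y ∂m
  represents : ∀ t : ℝ, 0 < t → ∀ f : Lp ℝ 2 m,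
      (T t f : X → ℝ) =ᵐ[m] fun x => ∫ y, p t x y * f y ∂m

theorem ContinuousLinearMap.apply_eq_smul_of_opNorm_le_of_le_inner {H : Type*}
    [NormedAddCommGroup H] [InnerProductSpace ℝ H] {A : H →L[ℝ] H} {c : ℝ} {w : H}
    (hA : ‖A‖ ≤ c) (hw : c * ‖w‖ ^ 2 ≤ ⟪w, A w⟫_ℝ) : A w = c • w := by
  have hc : 0 ≤ c := (norm_nonneg A).trans hA
  have hAw : ‖A w‖ ≤ c * ‖w‖ := A.le_of_opNorm_le hA w
  have hAw_sq : ‖A w‖ ^ 2 ≤ (c * ‖w‖) ^ 2 := pow_le_pow_left₀ (norm_nonneg _) hAw 2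
  have hsq : ‖A w - c • w‖ ^ 2 ≤ 0 := by
    rw [norm_sub_sq_real, norm_smul, real_inner_smul_right, real_inner_comm,
      Real.norm_of_nonneg hc]
    nlinarith [mul_le_mul_of_nonneg_left hw hc]
  exact sub_eq_zero.1 (norm_eq_zero.1 (by nlinarith [norm_nonneg (A w - c • w)]))

/-- The eigenspace `ker (L - E0)` of the generator, described through the semigroup. -/
def bottomEigenspace {H : Type*} [NormedAddCommGroup H] [NormedSpace ℝ H]
    (T : ℝ → H →L[ℝ] H) (E0 : ℝ) : Submodule ℝ H :=
  ⨅ (t : ℝ) (_ : 0 ≤ t), Module.End.eigenspace (T t : H →ₗ[ℝ] H) (Real.exp (-(t * E0)))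

theorem mem_bottomEigenspace_iff {H : Type*} [NormedAddCommGroup H] [NormedSpace ℝ H]
    {T : ℝ → H →L[ℝ] H} {E0 : ℝ} {g : H} :
    g ∈ bottomEigenspace T E0 ↔ ∀ t : ℝ, 0 ≤ t → T t g = Real.exp (-(t * E0)) • g := by
  simp [bottomEigenspace]

theorem tendsto_exp_mul_sub_of_le {E0 s : ℝ} (hs : E0 ≤ s) :
    Tendsto (fun t : ℝ => Real.exp (t * (E0 - s))) atTop
      (𝓝 (Set.indicator {E0} (fun _ => (1 : ℝ)) s)) := by
  rcases hs.eq_or_lt with rfl | hlt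
  · simp
  · rw [Set.indicator_of_notMem (by simpa using hlt.ne')]
    exact Real.tendsto_exp_atBot.comp
      (tendsto_id.atTop_mul_const_of_neg (sub_neg.2 hlt))

namespace IsHeatSemigroupOf

variable {H : Type*} [NormedAddCommGroup H] [InnerProductSpace ℝ H] [CompleteSpace H]
  {T : ℝ → H →L[ℝ] H} {ρ : H → Measure ℝ} {E0 : ℝ}

theorem tendsto_exp_mul_inner_apply_self (hT : IsHeatSemigroupOf T ρ E0) (f : H) :
    Tendsto (fun t : ℝ => Real.exp (t * E0) * ⟪f, T t f⟫_ℝ) atTop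
      (𝓝 (ρ f {E0}).toReal) := by
  have : IsFiniteMeasure (ρ f) := ⟨lt_top_iff_ne_top.2 (hT.finite f)⟩
  have hsupp : ∀ᵐ s ∂(ρ f), E0 ≤ s :=
    ae_iff.2 (measure_mono_null (fun s hs => not_le.1 hs) (hT.support_bddBelow f))
  have hlim : Tendsto (fun t : ℝ => ∫ s, Real.exp (t * (E0 - s)) ∂(ρ f)) atTop
      (𝓝 (∫ s, Set.indicator {E0} (fun _ => (1 : ℝ)) s ∂(ρ f))) := by
    refine tendsto_integral_filter_of_dominated_convergence (fun _ => 1)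
      (.of_forall fun t => by fun_prop) ?_ (integrable_const _)
      (hsupp.mono fun s hs => tendsto_exp_mul_sub_of_le hs)
    filter_upwards [eventually_ge_atTop 0] with t ht
    filter_upwards [hsupp] with s hs
    rw [Real.norm_of_nonneg (Real.exp_pos _).le, Real.exp_le_one_iff]
    exact mul_nonpos_of_nonneg_of_nonpos ht (sub_nonpos.2 hs)
  rw [integral_indicator_const _ (measurableSet_singleton E0), smul_eq_mul, mul_one] at hlim
  refine hlim.congr' ?_
  filter_upwards [eventually_ge_atTop 0] with t ht
  rw [hT.inner_eq f t ht, ← integral_const_mul]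
  congr 1 with s
  rw [← Real.exp_add]
  ring_nf

theorem inner_apply_apply (hT : IsHeatSemigroupOf T ρ E0) (f : H) {t s : ℝ} (ht : 0 ≤ t)
    (hs : 0 ≤ s) : ⟪T t f, T s f⟫_ℝ = ⟪f, T (t + s) f⟫_ℝ := by
  rw [hT.symm t ht, hT.semigroup t s ht hs, ContinuousLinearMap.comp_apply]

/-- Cauchy because `‖v t - v s‖² = h (2t) + h (2s) - 2 h (t + s)` for `v t = e^{tE0} T t f`,
`h t = ⟪f, v t⟫`, and `h` converges. -/
theorem cauchySeq_exp_mul_smul_apply (hT : IsHeatSemigroupOf T ρ E0) (f : H) :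
    CauchySeq fun t : ℝ => Real.exp (t * E0) • T t f := by
  set v := fun t : ℝ => Real.exp (t * E0) • T t f
  set h := fun t : ℝ => Real.exp (t * E0) * ⟪f, T t f⟫_ℝ
  have hinner : ∀ t s : ℝ, 0 ≤ t → 0 ≤ s → ⟪v t, v s⟫_ℝ = h (t + s) := by
    intro t s ht hs
    simp only [v, h, real_inner_smul_left, real_inner_smul_right,
      hT.inner_apply_apply f ht hs, add_mul, Real.exp_add]
    ring
  have hdist : ∀ q : ℝ × ℝ, 0 ≤ q → dist (v q.1) (v q.2)
      = √(h (q.1 + q.1) + h (q.2 + q.2) - 2 * h (q.1 + q.2)) := by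
    rintro ⟨t, s⟩ ⟨ht, hs⟩
    rw [← Real.sqrt_sq dist_nonneg, dist_eq_norm, norm_sub_sq_real,
      ← real_inner_self_eq_norm_sq, ← real_inner_self_eq_norm_sq, hinner t t ht ht,
      hinner s s hs hs, hinner t s ht hs]
    ring_nf
  have hh := hT.tendsto_exp_mul_inner_apply_self f
  have hsum : ∀ {a b : ℝ × ℝ → ℝ}, Tendsto a (atTop ×ˢ atTop) atTop →
      Tendsto b (atTop ×ˢ atTop) atTop → Tendsto (fun q => h (a q + b q)) atTop
        (𝓝 (ρ f {E0}).toReal) := fun ha hb =>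
    hh.comp (prod_atTop_atTop_eq (α := ℝ) (β := ℝ) ▸ ha.atTop_add_atTop hb)
  have hlim := ((hsum tendsto_fst tendsto_fst).add (hsum tendsto_snd tendsto_snd)).sub
    ((hsum tendsto_fst tendsto_snd).const_mul 2)
  rw [show ∀ c : ℝ, c + c - 2 * c = 0 by intro c; ring] at hlim
  rw [cauchySeq_iff_tendsto_dist_atTop_0]
  refine (Real.sqrt_zero ▸ hlim.sqrt).congr' ?_
  filter_upwards [eventually_ge_atTop 0] with q hq
  exact (hdist q hq).symm

theorem mem_bottomEigenspace_of_tendsto (hT : IsHeatSemigroupOf T ρ E0) {f P : H}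
    (hP : Tendsto (fun t : ℝ => Real.exp (t * E0) • T t f) atTop (𝓝 P)) :
    P ∈ bottomEigenspace T E0 := by
  refine mem_bottomEigenspace_iff.2 fun s hs => tendsto_nhds_unique
    (((T s).continuous.tendsto P).comp hP) ?_
  refine ((hP.comp (tendsto_atTop_add_const_left atTop s tendsto_id)).const_smul
    (Real.exp (-(s * E0)))).congr' ?_
  filter_upwards [eventually_ge_atTop 0] with t ht
  simp only [Function.comp_apply, id, map_smul, hT.semigroup s t hs ht,
    ContinuousLinearMap.comp_apply, smul_smul, ← Real.exp_add]
  ring_nf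

theorem tendsto_exp_mul_smul_apply (hT : IsHeatSemigroupOf T ρ E0) {u : H}
    (hu : u ∈ bottomEigenspace T E0) (hS : ∀ v ∈ bottomEigenspace T E0, v = ⟪u, v⟫_ℝ • u)
    (f : H) :
    Tendsto (fun t : ℝ => Real.exp (t * E0) • T t f) atTop (𝓝 (⟪u, f⟫_ℝ • u)) := by
  obtain ⟨P, hP⟩ := cauchySeq_tendsto_of_complete (hT.cauchySeq_exp_mul_smul_apply f)
  have hPu : ⟪u, P⟫_ℝ = ⟪u, f⟫_ℝ := by
    refine tendsto_nhds_unique (tendsto_const_nhds.inner hP) (tendsto_const_nhds.congr' ?_)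
    filter_upwards [eventually_ge_atTop 0] with t ht
    rw [real_inner_smul_right, ← hT.symm t ht, mem_bottomEigenspace_iff.1 hu t ht,
      real_inner_smul_left, ← mul_assoc, ← Real.exp_add, add_neg_cancel, Real.exp_zero,
      one_mul]
  rwa [hS P (hT.mem_bottomEigenspace_of_tendsto hP), hPu] at hP

end IsHeatSemigroupOf

section L2

variable {X : Type*} [MeasurableSpace X] {m : Measure X}

theorem MeasureTheory.L2.real_inner_eq_integral (f g : Lp ℝ 2 m) :
    ⟪f, g⟫_ℝ = ∫ x, f x * g x ∂m := by
  simp only [L2.inner_def, RCLike.inner_apply, conj_trivial, mul_comm]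

theorem MeasureTheory.L2.integrable_mul (f g : Lp ℝ 2 m) :
    Integrable (fun x => f x * g x) m := by
  simpa only [RCLike.inner_apply, conj_trivial, mul_comm] using L2.integrable_inner (𝕜 := ℝ) f g

theorem integral_mul_pos_of_ae_pos {f g : X → ℝ} (hf : ∀ᵐ x ∂m, 0 < f x) (hg : 0 ≤ᵐ[m] g)
    (hg0 : ¬g =ᵐ[m] 0) (hfg : Integrable (fun x => f x * g x) m) :
    0 < ∫ x, f x * g x ∂m := by
  have hfg0 : 0 ≤ᵐ[m] fun x => f x * g x := by
    filter_upwards [hf, hg] with x hfx hgx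
    exact mul_nonneg hfx.le hgx
  rw [integral_pos_iff_support_of_nonneg_ae hfg0 hfg]
  calc 0 < m (Function.support g) := pos_iff_ne_zero.2 fun h => hg0 (ae_iff.2 h)
    _ ≤ m (Function.support fun x => f x * g x) := measure_mono_ae <| by
      filter_upwards [hf] with x hfx hgx using mul_ne_zero hfx.ne' hgx

end L2

namespace IsKernelOf

variable {X : Type*} [MeasurableSpace X] {m : Measure X} {T : ℝ → Lp ℝ 2 m →L[ℝ] Lp ℝ 2 m}
  {p : ℝ → X → X → ℝ}

def rowLp (hp : IsKernelOf m T p) {t : ℝ} (ht : 0 < t) (x : X) : Lp ℝ 2 m :=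
  (hp.memL2 t ht x).toLp (p t x)

theorem inner_rowLp (hp : IsKernelOf m T p) {t : ℝ} (ht : 0 < t) (x : X) (f : Lp ℝ 2 m) :
    ⟪f, hp.rowLp ht x⟫_ℝ = ∫ y, p t x y * f y ∂m := by
  rw [L2.real_inner_eq_integral]
  refine integral_congr_ae ?_
  filter_upwards [(hp.memL2 t ht x).coeFn_toLp] with y hy
  rw [rowLp, hy, mul_comm]

theorem integrable_mul (hp : IsKernelOf m T p) {t : ℝ} (ht : 0 < t) (x : X) (f : Lp ℝ 2 m) :
    Integrable (fun y => p t x y * f y) m :=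
  (L2.integrable_mul (hp.rowLp ht x) f).congr <| by
    filter_upwards [(hp.memL2 t ht x).coeFn_toLp] with y hy
    rw [rowLp, hy]

theorem integral_mul_pos (hp : IsKernelOf m T p) {t : ℝ} (ht : 0 < t) {f : Lp ℝ 2 m}
    (hf : 0 ≤ f) (hf0 : f ≠ 0) (x : X) : 0 < ∫ y, p t x y * f y ∂m :=
  integral_mul_pos_of_ae_pos (.of_forall (hp.pos t ht x)) ((Lp.coeFn_nonneg f).2 hf)
    (mt Lp.eq_zero_iff_ae_eq_zero.2 hf0) (hp.integrable_mul ht x f)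

theorem inner_rowLp_apply_rowLp (hp : IsKernelOf m T p) {a s b : ℝ} (ha : 0 < a) (hs : 0 < s)
    (hb : 0 < b) (x y : X) :
    ⟪hp.rowLp ha x, T s (hp.rowLp hb y)⟫_ℝ = p (a + s + b) x y := by
  have hTs : ∀ᵐ z ∂m, T s (hp.rowLp hb y) z = p (s + b) z y := by
    filter_upwards [hp.represents s hs (hp.rowLp hb y)] with z hz
    rw [hz, hp.chapman s b hs hb]
    refine integral_congr_ae ?_
    filter_upwards [(hp.memL2 b hb y).coeFn_toLp] with w hw
    rw [rowLp, hw, hp.symm b hb y w]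
  rw [real_inner_comm, inner_rowLp, add_assoc, hp.chapman a (s + b) ha (add_pos hs hb)]
  refine integral_congr_ae ?_
  filter_upwards [hTs] with z hz
  rw [hz]

theorem ae_pos_of_apply_eq_smul (hp : IsKernelOf m T p) {t c : ℝ} (ht : 0 < t) (hc : 0 < c)
    {f : Lp ℝ 2 m} (hf : T t f = c • f) (hf0 : 0 ≤ f) (hne : f ≠ 0) :
    ∀ᵐ x ∂m, 0 < f x := by
  filter_upwards [hp.represents t ht f, Lp.coeFn_smul c f] with x hTx hcx
  rw [hf, hcx, Pi.smul_apply, smul_eq_mul] at hTx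
  exact pos_of_mul_pos_right (hTx ▸ hp.integral_mul_pos ht hf0 hne x) hc.le

theorem inner_apply_le_inner_abs_apply_abs (hp : IsKernelOf m T p) {t : ℝ} (ht : 0 < t)
    (f : Lp ℝ 2 m) : ⟪f, T t f⟫_ℝ ≤ ⟪|f|, T t |f|⟫_ℝ := by
  simp only [L2.real_inner_eq_integral]
  refine integral_mono_ae (L2.integrable_mul _ _) (L2.integrable_mul _ _) ?_
  filter_upwards [hp.represents t ht f, hp.represents t ht |f|, Lp.coeFn_abs f] with x hf habs hx
  have hpabs : ∫ y, p t x y * |f| y ∂m = ∫ y, |p t x y * f y| ∂m := by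
    refine integral_congr_ae ?_
    filter_upwards [Lp.coeFn_abs f] with y hy
    rw [hy, abs_mul, abs_of_pos (hp.pos t ht x y)]
  rw [hf, habs, hx, hpabs]
  calc f x * ∫ y, p t x y * f y ∂m ≤ |f x * ∫ y, p t x y * f y ∂m| := le_abs_self _
    _ = |f x| * |∫ y, p t x y * f y ∂m| := abs_mul _ _
    _ ≤ |f x| * ∫ y, |p t x y * f y| ∂m :=
      mul_le_mul_of_nonneg_left (abs_integral_le_integral_abs) (abs_nonneg _)

end IsKernelOf

section PerronFrobenius

variable {X : Type*} [MeasurableSpace X] {m : Measure X} {T : ℝ → Lp ℝ 2 m →L[ℝ] Lp ℝ 2 m}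
  {ρ : Lp ℝ 2 m → Measure ℝ} {E0 : ℝ} {p : ℝ → X → X → ℝ}

/-- Equality in `⟪f, T t f⟫ ≤ ⟪|f|, T t |f|⟫ ≤ ‖T t‖ ‖f‖²` forces `|f|` to be an eigenvector. -/
theorem abs_mem_bottomEigenspace (hT : IsHeatSemigroupOf T ρ E0) (hp : IsKernelOf m T p)
    {f : Lp ℝ 2 m} (hf : f ∈ bottomEigenspace T E0) : |f| ∈ bottomEigenspace T E0 := by
  rw [mem_bottomEigenspace_iff] at hf ⊢
  intro t ht
  rcases ht.eq_or_lt with rfl | ht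
  · simp [hT.map_zero]
  refine (T t).apply_eq_smul_of_opNorm_le_of_le_inner (hT.norm_eq t ht.le).le ?_
  calc Real.exp (-(t * E0)) * ‖|f|‖ ^ 2 = ⟪f, T t f⟫_ℝ := by
        rw [norm_abs_eq_norm, hf t ht.le, real_inner_smul_right, real_inner_self_eq_norm_sq]
    _ ≤ ⟪|f|, T t |f|⟫_ℝ := hp.inner_apply_le_inner_abs_apply_abs ht f

theorem posPart_mem_bottomEigenspace (hT : IsHeatSemigroupOf T ρ E0) (hp : IsKernelOf m T p)
    {f : Lp ℝ 2 m} (hf : f ∈ bottomEigenspace T E0) : f⁺ ∈ bottomEigenspace T E0 := by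
  have h2 : |f| + f = (2 : ℝ) • f⁺ := by
    calc |f| + f = (f⁺ + f⁻) + (f⁺ - f⁻) := by rw [posPart_add_negPart, posPart_sub_negPart]
      _ = (2 : ℝ) • f⁺ := by rw [two_smul]; abel
  rw [← Submodule.smul_mem_iff _ (two_ne_zero (α := ℝ)), ← h2]
  exact add_mem (abs_mem_bottomEigenspace hT hp hf) hf

theorem posPart_eq_zero_of_inner_eq_zero (hT : IsHeatSemigroupOf T ρ E0)
    (hp : IsKernelOf m T p) {u f : Lp ℝ 2 m} (hu : ∀ᵐ x ∂m, 0 < u x)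
    (hf : f ∈ bottomEigenspace T E0) (huf : ⟪u, f⟫_ℝ = 0) : f⁺ = 0 := by
  by_contra hne
  have hpos : ∀ᵐ x ∂m, 0 < f⁺ x :=
    hp.ae_pos_of_apply_eq_smul one_pos (Real.exp_pos _)
      (mem_bottomEigenspace_iff.1 (posPart_mem_bottomEigenspace hT hp hf) 1 zero_le_one)
      (posPart_nonneg f) hne
  have hf_pos : ∀ᵐ x ∂m, 0 < f x := by
    filter_upwards [hpos, Lp.coeFn_sup f 0, Lp.coeFn_zero ℝ 2 m] with x hx hsup hzero
    rw [posPart_def, hsup, Pi.sup_apply, hzero] at hx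
    simpa using hx
  have hf_ne : ¬f =ᵐ[m] 0 := fun h => hne (by rw [Lp.eq_zero_iff_ae_eq_zero.2 h, posPart_zero])
  refine huf.not_gt ?_
  rw [L2.real_inner_eq_integral]
  exact integral_mul_pos_of_ae_pos hu (hf_pos.mono fun x hx => hx.le) hf_ne
    (L2.integrable_mul u f)

theorem eq_inner_smul_of_mem_bottomEigenspace (hT : IsHeatSemigroupOf T ρ E0)
    (hp : IsKernelOf m T p) {u f : Lp ℝ 2 m} (hu_mem : u ∈ bottomEigenspace T E0)
    (hu : ∀ᵐ x ∂m, 0 < u x) (hu1 : ‖u‖ = 1) (hf : f ∈ bottomEigenspace T E0) :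
    f = ⟪u, f⟫_ℝ • u := by
  set w := f - ⟪u, f⟫_ℝ • u
  have hw : w ∈ bottomEigenspace T E0 := sub_mem hf (Submodule.smul_mem _ _ hu_mem)
  have huw : ⟪u, w⟫_ℝ = 0 := by
    rw [inner_sub_right, real_inner_smul_right, real_inner_self_eq_norm_sq, hu1]
    ring
  have hw_pos : w⁺ = 0 := posPart_eq_zero_of_inner_eq_zero hT hp hu hw huw
  have hw_neg : w⁻ = 0 := by
    rw [← posPart_neg]
    exact posPart_eq_zero_of_inner_eq_zero hT hp hu (neg_mem hw)
      (by rw [inner_neg_right, huw, neg_zero])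
  refine sub_eq_zero.1 (show w = 0 from ?_)
  rw [← posPart_sub_negPart w, hw_pos, hw_neg, sub_zero]

theorem exists_pos_mem_bottomEigenspace (hT : IsHeatSemigroupOf T ρ E0)
    (hp : IsKernelOf m T p) {g : Lp ℝ 2 m} (hg : g ∈ bottomEigenspace T E0) (hg0 : g ≠ 0) :
    ∃ u ∈ bottomEigenspace T E0, 0 ≤ u ∧ ‖u‖ = 1 ∧
      ∀ f ∈ bottomEigenspace T E0, f = ⟪u, f⟫_ℝ • u := by
  set u := |‖g‖⁻¹ • g|
  have hu_mem : u ∈ bottomEigenspace T E0 :=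
    abs_mem_bottomEigenspace hT hp (Submodule.smul_mem _ _ hg)
  have hu1 : ‖u‖ = 1 := by
    rw [norm_abs_eq_norm, norm_smul, norm_inv, norm_norm,
      inv_mul_cancel₀ (norm_ne_zero_iff.2 hg0)]
  have hu_pos : ∀ᵐ x ∂m, 0 < u x :=
    hp.ae_pos_of_apply_eq_smul one_pos (Real.exp_pos _)
      (mem_bottomEigenspace_iff.1 hu_mem 1 zero_le_one) (abs_nonneg _)
      (norm_ne_zero_iff.1 (by simp [hu1]))
  exact ⟨u, hu_mem, abs_nonneg _, hu1, fun f hf =>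
    eq_inner_smul_of_mem_bottomEigenspace hT hp hu_mem hu_pos hu1 hf⟩

end PerronFrobenius

section GroundStateFunction

variable {X : Type*} [MeasurableSpace X] {m : Measure X} {T : ℝ → Lp ℝ 2 m →L[ℝ] Lp ℝ 2 m}
  {E0 : ℝ} {p : ℝ → X → X → ℝ}

def IsGroundStateLimit (p : ℝ → X → X → ℝ) (E0 : ℝ) (Φ : X → ℝ) : Prop :=
  Measurable Φ ∧ (∀ x, 0 ≤ Φ x) ∧
    ∀ x y : X, Tendsto (fun t : ℝ => Real.exp (t * E0) * p t x y) atTop (𝓝 (Φ x * Φ y))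

theorem IsGroundStateLimit.unique {Φ Ψ : X → ℝ} (hΨ : IsGroundStateLimit p E0 Ψ)
    (hΦ : IsGroundStateLimit p E0 Φ) : Ψ = Φ :=
  funext fun x => (mul_self_inj (hΨ.2.1 x) (hΦ.2.1 x)).1
    (tendsto_nhds_unique (hΨ.2.2 x x) (hΦ.2.2 x x))

/-- `Φ = √(Φ²)` and `Φ(x)²` is a pointwise limit of the measurable `x ↦ e^{nE0} p_n(x, x)`. -/
theorem measurable_of_tendsto_exp_mul_diag
    (hmeas : Measurable fun q : ℝ × X × X => p q.1 q.2.1 q.2.2) {Φ : X → ℝ}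
    (hΦ0 : ∀ x, 0 ≤ Φ x)
    (hlim : ∀ x, Tendsto (fun t : ℝ => Real.exp (t * E0) * p t x x) atTop (𝓝 (Φ x * Φ x))) :
    Measurable Φ := by
  have hsq : Measurable fun x => Φ x * Φ x :=
    measurable_of_tendsto_metrizable (f := fun (n : ℕ) x => Real.exp (n * E0) * p n x x)
      (fun n => measurable_const.mul
        (hmeas.comp (measurable_const.prodMk (measurable_id.prodMk measurable_id))))
      (tendsto_pi_nhds.2 fun x => (hlim x).comp tendsto_natCast_atTop_atTop)
  rw [show Φ = fun x => √(Φ x * Φ x) from funext fun x => (Real.sqrt_mul_self (hΦ0 x)).symm]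
  exact hsq.sqrt

namespace IsKernelOf

/-- `x ↦ e^{E0} ∫ p_1(x, y) u(y) dm(y)`, an everywhere defined version of `e^{E0} e^{-L} u`. -/
def groundStateFun (hp : IsKernelOf m T p) (E0 : ℝ) (u : Lp ℝ 2 m) : X → ℝ :=
  fun x => Real.exp E0 * ⟪u, hp.rowLp one_pos x⟫_ℝ

theorem tendsto_exp_mul_of_tendsto (hp : IsKernelOf m T p) {y : X} {P : Lp ℝ 2 m}
    (hP : Tendsto (fun t : ℝ => Real.exp (t * E0) • T t (hp.rowLp one_pos y)) atTop (𝓝 P))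
    (x : X) :
    Tendsto (fun t : ℝ => Real.exp (t * E0) * p t x y) atTop
      (𝓝 (Real.exp (2 * E0) * ⟪hp.rowLp one_pos x, P⟫_ℝ)) := by
  refine (((tendsto_const_nhds.inner hP).const_mul (Real.exp (2 * E0))).comp
    (tendsto_atTop_add_const_right atTop (-2) tendsto_id)).congr' ?_
  filter_upwards [eventually_gt_atTop 2] with t ht
  have hp_t := hp.inner_rowLp_apply_rowLp one_pos (sub_pos.2 ht) one_pos x y
  rw [show 1 + (t - 2) + 1 = t by ring] at hp_t
  simp only [Function.comp_apply, id, real_inner_smul_right, ← sub_eq_add_neg, hp_t, ← mul_assoc,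
    ← Real.exp_add]
  ring_nf

theorem isGroundStateLimit_groundStateFun (hp : IsKernelOf m T p) {u : Lp ℝ 2 m} (hu0 : 0 ≤ u)
    (hP : ∀ f, Tendsto (fun t : ℝ => Real.exp (t * E0) • T t f) atTop (𝓝 (⟪u, f⟫_ℝ • u))) :
    IsGroundStateLimit p E0 (hp.groundStateFun E0 u) := by
  have hΦ0 : ∀ x, 0 ≤ hp.groundStateFun E0 u x := fun x => by
    refine mul_nonneg (Real.exp_pos _).le ?_
    rw [inner_rowLp]
    refine integral_nonneg_of_ae ?_
    filter_upwards [(Lp.coeFn_nonneg u).2 hu0] with y hy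
    exact mul_nonneg (hp.pos 1 one_pos x y).le hy
  have hlim : ∀ x y, Tendsto (fun t : ℝ => Real.exp (t * E0) * p t x y) atTop
      (𝓝 (hp.groundStateFun E0 u x * hp.groundStateFun E0 u y)) := fun x y => by
    convert hp.tendsto_exp_mul_of_tendsto (hP _) x using 2
    rw [groundStateFun, groundStateFun, real_inner_smul_right, real_inner_comm, two_mul,
      Real.exp_add]
    ring
  exact ⟨measurable_of_tendsto_exp_mul_diag hp.meas hΦ0 fun x => hlim x x, hΦ0, hlim⟩

theorem groundStateFun_pos (hp : IsKernelOf m T p) {u : Lp ℝ 2 m} (hu0 : 0 ≤ u) (hu : u ≠ 0)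
    (x : X) : 0 < hp.groundStateFun E0 u x :=
  mul_pos (Real.exp_pos _) (hp.inner_rowLp one_pos x u ▸ hp.integral_mul_pos one_pos hu0 hu x)

theorem groundStateFun_ae_eq (hp : IsKernelOf m T p) {u : Lp ℝ 2 m}
    (hu : T 1 u = Real.exp (-(1 * E0)) • u) : hp.groundStateFun E0 u =ᵐ[m] u := by
  filter_upwards [hp.represents 1 one_pos u, Lp.coeFn_smul (Real.exp (-(1 * E0))) u]
    with x hTx hux
  rw [hu, hux, Pi.smul_apply, smul_eq_mul] at hTx
  rw [groundStateFun, inner_rowLp, ← hTx, ← mul_assoc, ← Real.exp_add, one_mul, add_neg_cancel,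
    Real.exp_zero, one_mul]

end IsKernelOf

end GroundStateFunction

theorem statement9_general {X : Type*} [MeasurableSpace X] (m : Measure X)
    (T : ℝ → Lp ℝ 2 m →L[ℝ] Lp ℝ 2 m) (ρ : Lp ℝ 2 m → Measure ℝ) (E0 : ℝ)
    (hT : IsHeatSemigroupOf T ρ E0)
    (p : ℝ → X → X → ℝ) (hp : IsKernelOf m T p) :
    ∃ Φ : X → ℝ,
      (Measurable Φ ∧ (∀ x, 0 ≤ Φ x) ∧
        ∀ x y : X, Tendsto (fun t : ℝ => Real.exp (t * E0) * p t x y) atTop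
          (𝓝 (Φ x * Φ y))) ∧
      (∀ Ψ : X → ℝ, (Measurable Ψ ∧ (∀ x, 0 ≤ Ψ x) ∧
        ∀ x y : X, Tendsto (fun t : ℝ => Real.exp (t * E0) * p t x y) atTop
          (𝓝 (Ψ x * Ψ y))) → Ψ = Φ) ∧
      ((∃ g : Lp ℝ 2 m, g ≠ 0 ∧ ∀ t : ℝ, 0 ≤ t → T t g = Real.exp (-(t * E0)) • g) →
        (∀ x, 0 < Φ x) ∧ ∃ hΦ : MemLp Φ 2 m, ‖hΦ.toLp Φ‖ = 1 ∧
          ∀ t : ℝ, 0 ≤ t → T t (hΦ.toLp Φ) = Real.exp (-(t * E0)) • hΦ.toLp Φ) ∧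
      ((¬ ∃ g : Lp ℝ 2 m, g ≠ 0 ∧ ∀ t : ℝ, 0 ≤ t → T t g = Real.exp (-(t * E0)) • g) →
        ∀ x, Φ x = 0) := by
  by_cases hE : ∃ g : Lp ℝ 2 m, g ≠ 0 ∧ ∀ t : ℝ, 0 ≤ t → T t g = Real.exp (-(t * E0)) • g
  · obtain ⟨g, hg0, hg⟩ := hE
    obtain ⟨u, hu_mem, hu0, hu1, hS⟩ :=
      exists_pos_mem_bottomEigenspace hT hp (mem_bottomEigenspace_iff.2 hg) hg0
    have hΦ := hp.isGroundStateLimit_groundStateFun hu0 (hT.tendsto_exp_mul_smul_apply hu_mem hS)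
    have hu_eig := mem_bottomEigenspace_iff.1 hu_mem
    have hΦu := hp.groundStateFun_ae_eq (hu_eig 1 zero_le_one)
    have hL2 : MemLp (hp.groundStateFun E0 u) 2 m := (Lp.memLp u).ae_eq hΦu.symm
    have hL2u : hL2.toLp _ = u := Lp.ext (hL2.coeFn_toLp.trans hΦu)
    refine ⟨_, hΦ, fun Ψ hΨ => IsGroundStateLimit.unique hΨ hΦ, fun _ => ?_,
      fun h => (h ⟨g, hg0, hg⟩).elim⟩
    exact ⟨hp.groundStateFun_pos hu0 (norm_ne_zero_iff.1 (by simp [hu1])), hL2,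
      by rw [hL2u, hu1], by rw [hL2u]; exact hu_eig⟩
  · have hS : ∀ f ∈ bottomEigenspace T E0, f = ⟪0, f⟫_ℝ • (0 : Lp ℝ 2 m) := fun f hf => by
      by_contra hne
      exact hE ⟨f, by simpa using hne, mem_bottomEigenspace_iff.1 hf⟩
    have hΦ := hp.isGroundStateLimit_groundStateFun le_rfl
      (hT.tendsto_exp_mul_smul_apply (zero_mem _) hS)
    exact ⟨_, hΦ, fun Ψ hΨ => IsGroundStateLimit.unique hΨ hΦ, fun h => (hE h).elim,
      fun _ x => by simp [IsKernelOf.groundStateFun]⟩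

/-- Let `L` be a selfadjoint operator in `L²(X, m)`, bounded below, with `E0`
the infimum of the spectrum of `L`, and assume that the semigroup `(e^{-tL})_{t≥0}` has a
kernel `p` satisfying (K1), (K2), (K3). Then there exists a unique measurable function
`Φ : X → [0, ∞)` such that `e^{tE0} p_t(x, y) → Φ(x) Φ(y)` as `t → ∞` for all `x, y ∈ X`.
Moreover, if `E0` is an eigenvalue of `L` (equivalently, `L` has an eigenvector `g ≠ 0` with
`e^{-tL} g = e^{-tE0} g` for all `t ≥ 0`), then `Φ` is a strictly positive (everywhere on `X`)
normalized eigenfunction of `L` to the eigenvalue `E0`; if `E0` is not an eigenvalue, then `Φ`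
vanishes everywhere. -/
theorem statement9 {X : Type*} [MeasurableSpace X] (m : Measure X) [SigmaFinite m]
    (T : ℝ → Lp ℝ 2 m →L[ℝ] Lp ℝ 2 m) (ρ : Lp ℝ 2 m → Measure ℝ) (E0 : ℝ)
    (hT : IsHeatSemigroupOf T ρ E0)
    (p : ℝ → X → X → ℝ) (hp : IsKernelOf m T p) :
    ∃ Φ : X → ℝ,
      (Measurable Φ ∧ (∀ x, 0 ≤ Φ x) ∧
        ∀ x y : X, Tendsto (fun t : ℝ => Real.exp (t * E0) * p t x y) atTop
          (𝓝 (Φ x * Φ y))) ∧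
      (∀ Ψ : X → ℝ, (Measurable Ψ ∧ (∀ x, 0 ≤ Ψ x) ∧
        ∀ x y : X, Tendsto (fun t : ℝ => Real.exp (t * E0) * p t x y) atTop
          (𝓝 (Ψ x * Ψ y))) → Ψ = Φ) ∧
      ((∃ g : Lp ℝ 2 m, g ≠ 0 ∧ ∀ t : ℝ, 0 ≤ t → T t g = Real.exp (-(t * E0)) • g) →
        (∀ x, 0 < Φ x) ∧ ∃ hΦ : MemLp Φ 2 m, ‖hΦ.toLp Φ‖ = 1 ∧
          ∀ t : ℝ, 0 ≤ t → T t (hΦ.toLp Φ) = Real.exp (-(t * E0)) • hΦ.toLp Φ) ∧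
      ((¬ ∃ g : Lp ℝ 2 m, g ≠ 0 ∧ ∀ t : ℝ, 0 ≤ t → T t g = Real.exp (-(t * E0)) • g) →
        ∀ x, Φ x = 0) :=
  statement9_general m T ρ E0 hT p hp
end
end

section
/- Let L be a selfadjoint operator in L²(X, m), bounded below, with E0 the infimum of the spectrum of L, and assume that the semigroup (e^{-tL})_{t≥0} has a kernel p satisfying (K1), (K2), (K3). For t > 0 and x ∈ X set Φ_t(x) := (e^{tE0} p_t(x, x))^{1/2}. Then the following are equivalent: (i) E0 is an eigenvalue of L; (ii) the pointwise limit as t → ∞ of Φ_t is not the zero function in L²(X, m); (iii) there exists an x ∈ X such that lim_{t→∞} Φ_t(x) ≠ 0. -/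
/-!
If `Φ(x) ≠ 0`, put `w_t = e^{t E0} e^{-tL} p_1(x, ·)`. By symmetry and the semigroup law,
`⟪w_a, w_b⟫ = e^{(a+b) E0} ⟪p_1(x, ·), e^{-(a+b)L} p_1(x, ·)⟫ = e^{-2 E0} Φ_{a+b+2}(x)²`,
which tends to `e^{-2 E0} Φ(x)²`; hence `‖w_a - w_b‖² → 0`, the limit `g` of `w_t` satisfies
`e^{-sL} g = e^{-s E0} g`, and `⟪p_1(x, ·), g⟫ = e^{-2 E0} Φ(x)² ≠ 0`, so `g ≠ 0`.

Conversely, an eigenvector `g` satisfies `g(x) = e^{t E0} ⟪p_t(x, ·), g⟫` for a.e. `x`, and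
Cauchy–Schwarz with `‖p_t(x, ·)‖² = p_{2t}(x, x)` gives `|g(x)| ≤ Φ_{2t}(x) ‖g‖`. Letting
`t → ∞` yields `|g| ≤ Φ ‖g‖` a.e., so `Φ` cannot vanish a.e.
-/

open MeasureTheory Filter Topology
open scoped InnerProductSpace ENNReal

noncomputable section

section Semigroup

variable {H : Type*} [NormedAddCommGroup H] [InnerProductSpace ℝ H]
  {T : ℝ → H →L[ℝ] H} {E0 : ℝ}

theorem inner_rescaled_semigroup
    (hsymm : ∀ t : ℝ, 0 ≤ t → ∀ f g : H, ⟪T t f, g⟫_ℝ = ⟪f, T t g⟫_ℝ)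
    (hsg : ∀ s t : ℝ, 0 ≤ s → 0 ≤ t → T (s + t) = T s ∘L T t)
    (f : H) {a b : ℝ} (ha : 0 ≤ a) (hb : 0 ≤ b) :
    ⟪Real.exp (a * E0) • T a f, Real.exp (b * E0) • T b f⟫_ℝ =
      Real.exp ((a + b) * E0) * ⟪f, T (a + b) f⟫_ℝ := by
  rw [real_inner_smul_left, real_inner_smul_right, hsymm a ha, hsg a b ha hb, add_mul,
    Real.exp_add, ContinuousLinearMap.comp_apply]
  ring

theorem cauchySeq_rescaled_semigroup
    (hsymm : ∀ t : ℝ, 0 ≤ t → ∀ f g : H, ⟪T t f, g⟫_ℝ = ⟪f, T t g⟫_ℝ)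
    (hsg : ∀ s t : ℝ, 0 ≤ s → 0 ≤ t → T (s + t) = T s ∘L T t)
    {f : H} {c : ℝ}
    (hlim : Tendsto (fun t => Real.exp (t * E0) * ⟪f, T t f⟫_ℝ) atTop (𝓝 c)) :
    CauchySeq fun t => Real.exp (t * E0) • T t f := by
  set h := fun t => Real.exp (t * E0) * ⟪f, T t f⟫_ℝ
  have hfst : Tendsto (fun q : ℝ × ℝ => q.1) atTop atTop := by
    rw [← prod_atTop_atTop_eq]; exact tendsto_fst
  have hsnd : Tendsto (fun q : ℝ × ℝ => q.2) atTop atTop := by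
    rw [← prod_atTop_atTop_eq]; exact tendsto_snd
  have hsq : Tendsto (fun q : ℝ × ℝ => h (q.1 + q.1) - 2 * h (q.1 + q.2) + h (q.2 + q.2))
      atTop (𝓝 0) := by
    have := ((hlim.comp (hfst.atTop_add_atTop hfst)).sub
      ((hlim.comp (hfst.atTop_add_atTop hsnd)).const_mul 2)).add
      (hlim.comp (hsnd.atTop_add_atTop hsnd))
    rwa [show c - 2 * c + c = 0 by ring] at this
  have hdist : ∀ᶠ q : ℝ × ℝ in atTop, Real.sqrt (h (q.1 + q.1) - 2 * h (q.1 + q.2) +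
      h (q.2 + q.2)) = dist (Real.exp (q.1 * E0) • T q.1 f) (Real.exp (q.2 * E0) • T q.2 f) := by
    filter_upwards [hfst.eventually_ge_atTop 0, hsnd.eventually_ge_atTop 0] with q ha hb
    rw [dist_eq_norm, ← Real.sqrt_sq (norm_nonneg _), norm_sub_sq_real,
      ← real_inner_self_eq_norm_sq, ← real_inner_self_eq_norm_sq,
      inner_rescaled_semigroup hsymm hsg f ha ha, inner_rescaled_semigroup hsymm hsg f ha hb,
      inner_rescaled_semigroup hsymm hsg f hb hb]
  rw [cauchySeq_iff_tendsto_dist_atTop_0]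
  refine Tendsto.congr' hdist ?_
  simpa only [Real.sqrt_zero] using hsq.sqrt

theorem exists_eigenvector_of_tendsto_inner [CompleteSpace H]
    (hsymm : ∀ t : ℝ, 0 ≤ t → ∀ f g : H, ⟪T t f, g⟫_ℝ = ⟪f, T t g⟫_ℝ)
    (hsg : ∀ s t : ℝ, 0 ≤ s → 0 ≤ t → T (s + t) = T s ∘L T t)
    {f : H} {c : ℝ} (hc : c ≠ 0)
    (hlim : Tendsto (fun t => Real.exp (t * E0) * ⟪f, T t f⟫_ℝ) atTop (𝓝 c)) :
    ∃ g : H, g ≠ 0 ∧ ∀ t : ℝ, 0 ≤ t → T t g = Real.exp (-(t * E0)) • g := by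
  obtain ⟨g, hg⟩ := cauchySeq_tendsto_of_complete (cauchySeq_rescaled_semigroup hsymm hsg hlim)
  have hfg : ⟪f, g⟫_ℝ = c := by
    refine tendsto_nhds_unique ((tendsto_const_nhds (x := f)).inner hg) ?_
    simpa only [real_inner_smul_right] using hlim
  refine ⟨g, fun hg0 => hc (by rw [← hfg, hg0, inner_zero_right]), fun s hs => ?_⟩
  have hshift : Tendsto
      (fun t => Real.exp (-(s * E0)) • (Real.exp ((t + s) * E0) • T (t + s) f)) atTop
      (𝓝 (Real.exp (-(s * E0)) • g)) :=
    (hg.comp (tendsto_atTop_add_const_right atTop s tendsto_id)).const_smul _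
  refine tendsto_nhds_unique (((T s).continuous.tendsto g).comp hg) (hshift.congr' ?_)
  filter_upwards [eventually_ge_atTop 0] with t ht
  rw [Function.comp_apply, map_smul, smul_smul, ← Real.exp_add, add_comm t s, hsg s t hs ht,
    ContinuousLinearMap.comp_apply]
  ring_nf

end Semigroup

namespace IsKernelOf

variable {X : Type*} [MeasurableSpace X] {m : Measure X}
  {T : ℝ → Lp ℝ 2 m →L[ℝ] Lp ℝ 2 m} {p : ℝ → X → X → ℝ}

theorem inner_toLp_eq_integral (hp : IsKernelOf m T p) {t : ℝ} (ht : 0 < t) (x : X)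
    (g : Lp ℝ 2 m) : ⟪(hp.memL2 t ht x).toLp, g⟫_ℝ = ∫ y, p t x y * g y ∂m := by
  rw [L2.inner_def]
  refine integral_congr_ae ?_
  filter_upwards [(hp.memL2 t ht x).coeFn_toLp] with y hy
  rw [hy, real_inner_eq_re_inner, RCLike.inner_apply, conj_trivial, RCLike.re_to_real, mul_comm]

theorem inner_toLp_toLp (hp : IsKernelOf m T p) {s t : ℝ} (hs : 0 < s) (ht : 0 < t) (x y : X) :
    ⟪(hp.memL2 s hs x).toLp, (hp.memL2 t ht y).toLp⟫_ℝ = p (s + t) x y := by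
  rw [hp.inner_toLp_eq_integral hs, hp.chapman s t hs ht]
  refine integral_congr_ae ?_
  filter_upwards [(hp.memL2 t ht y).coeFn_toLp] with z hz
  rw [hz, hp.symm t ht]

theorem norm_toLp (hp : IsKernelOf m T p) {t : ℝ} (ht : 0 < t) (x : X) :
    ‖(hp.memL2 t ht x).toLp‖ = Real.sqrt (p (t + t) x x) := by
  rw [← hp.inner_toLp_toLp ht ht, real_inner_self_eq_norm_sq, Real.sqrt_sq (norm_nonneg _)]

theorem apply_toLp (hp : IsKernelOf m T p) {s t : ℝ} (hs : 0 < s) (ht : 0 < t) (x : X) :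
    T t (hp.memL2 s hs x).toLp = (hp.memL2 (t + s) (add_pos ht hs) x).toLp := by
  refine Lp.ext ?_
  filter_upwards [hp.represents t ht _, (hp.memL2 (t + s) (add_pos ht hs) x).coeFn_toLp]
    with y hrep hy
  rw [hrep, hy, ← hp.inner_toLp_eq_integral ht, hp.inner_toLp_toLp ht hs, hp.symm _ (add_pos ht hs)]

theorem exists_eigenvector_of_ne_zero (hp : IsKernelOf m T p) {E0 : ℝ}
    (hsymm : ∀ t : ℝ, 0 ≤ t → ∀ f g : Lp ℝ 2 m, ⟪T t f, g⟫_ℝ = ⟪f, T t g⟫_ℝ)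
    (hsg : ∀ s t : ℝ, 0 ≤ s → 0 ≤ t → T (s + t) = T s ∘L T t) {Φ : X → ℝ}
    (hΦ : ∀ x : X, Tendsto (fun t : ℝ => Real.sqrt (Real.exp (t * E0) * p t x x))
      atTop (𝓝 (Φ x))) {x : X} (hx : Φ x ≠ 0) :
    ∃ g : Lp ℝ 2 m, g ≠ 0 ∧ ∀ t : ℝ, 0 ≤ t → T t g = Real.exp (-(t * E0)) • g := by
  have hsq : Tendsto (fun t => Real.exp (t * E0) * p t x x) atTop (𝓝 (Φ x ^ 2)) := by
    refine ((hΦ x).pow 2).congr' ?_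
    filter_upwards [eventually_gt_atTop 0] with t ht
    exact Real.sq_sqrt (mul_nonneg (Real.exp_nonneg _) (hp.pos t ht x x).le)
  -- `e^{t E0} ⟪p_1(x, ·), e^{-tL} p_1(x, ·)⟫ = e^{-2 E0} · e^{(t+2) E0} p_{t+2}(x, x)`
  refine exists_eigenvector_of_tendsto_inner hsymm hsg (f := (hp.memL2 1 one_pos x).toLp)
    (mul_ne_zero (Real.exp_ne_zero (-(2 * E0))) (pow_ne_zero 2 hx)) <|
    ((hsq.comp (tendsto_atTop_add_const_right atTop 2 tendsto_id)).const_mul _).congr' ?_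
  filter_upwards [eventually_gt_atTop 0] with t ht
  rw [hp.apply_toLp one_pos ht, hp.inner_toLp_toLp one_pos (add_pos ht one_pos),
    Function.comp_apply, id_eq, ← mul_assoc, ← Real.exp_add]
  ring_nf

theorem ae_abs_le_of_eigenvector (hp : IsKernelOf m T p) {E0 : ℝ} {g : Lp ℝ 2 m}
    (heig : ∀ t : ℝ, 0 ≤ t → T t g = Real.exp (-(t * E0)) • g) {t : ℝ} (ht : 0 < t) :
    ∀ᵐ x ∂m, |g x| ≤ Real.sqrt (Real.exp ((t + t) * E0) * p (t + t) x x) * ‖g‖ := by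
  filter_upwards [hp.represents t ht g, heig t ht.le ▸ Lp.coeFn_smul (Real.exp (-(t * E0))) g]
    with x hrep hsmul
  have hgx : g x = Real.exp (t * E0) * ⟪(hp.memL2 t ht x).toLp, g⟫_ℝ := by
    rw [hp.inner_toLp_eq_integral ht, ← hrep, hsmul, Pi.smul_apply, smul_eq_mul, ← mul_assoc,
      ← Real.exp_add, add_neg_cancel, Real.exp_zero, one_mul]
  calc |g x| = Real.exp (t * E0) * |⟪(hp.memL2 t ht x).toLp, g⟫_ℝ| := by
        rw [hgx, abs_mul, abs_of_pos (Real.exp_pos _)]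
    _ ≤ Real.exp (t * E0) * (‖(hp.memL2 t ht x).toLp‖ * ‖g‖) := by
        gcongr; exact abs_real_inner_le_norm _ _
    _ = Real.sqrt (Real.exp ((t + t) * E0) * p (t + t) x x) * ‖g‖ := by
        rw [hp.norm_toLp ht, Real.sqrt_mul (Real.exp_nonneg _), add_mul, Real.exp_add,
          Real.sqrt_mul_self (Real.exp_nonneg _)]
        ring

theorem ae_abs_le_mul_norm_of_eigenvector (hp : IsKernelOf m T p) {E0 : ℝ} {Φ : X → ℝ}
    (hΦ : ∀ x : X, Tendsto (fun t : ℝ => Real.sqrt (Real.exp (t * E0) * p t x x))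
      atTop (𝓝 (Φ x))) {g : Lp ℝ 2 m}
    (heig : ∀ t : ℝ, 0 ≤ t → T t g = Real.exp (-(t * E0)) • g) :
    ∀ᵐ x ∂m, |g x| ≤ Φ x * ‖g‖ := by
  have htend : Tendsto (fun n : ℕ => ((n : ℝ) + 1) + ((n : ℝ) + 1)) atTop atTop :=
    have h := tendsto_atTop_add_const_right atTop 1 tendsto_natCast_atTop_atTop
    h.atTop_add_atTop h
  filter_upwards [ae_all_iff.2 fun n : ℕ => hp.ae_abs_le_of_eigenvector heig n.cast_add_one_pos]
    with x hx
  exact ge_of_tendsto (((hΦ x).comp htend).mul_const ‖g‖) (Eventually.of_forall hx)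

end IsKernelOf

theorem statement11_general {X : Type*} [MeasurableSpace X] (m : Measure X)
    (T : ℝ → Lp ℝ 2 m →L[ℝ] Lp ℝ 2 m) (ρ : Lp ℝ 2 m → Measure ℝ) (E0 : ℝ)
    (hT : IsHeatSemigroupOf T ρ E0)
    (p : ℝ → X → X → ℝ) (hp : IsKernelOf m T p)
    (Φ : X → ℝ)
    (hΦ : ∀ x : X, Tendsto (fun t : ℝ => Real.sqrt (Real.exp (t * E0) * p t x x))
      atTop (𝓝 (Φ x))) :
    ((∃ g : Lp ℝ 2 m, g ≠ 0 ∧ ∀ t : ℝ, 0 ≤ t → T t g = Real.exp (-(t * E0)) • g) ↔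
      ¬ (Φ =ᵐ[m] (fun _ => 0))) ∧
    ((¬ (Φ =ᵐ[m] (fun _ => 0))) ↔ ∃ x : X, Φ x ≠ 0) := by
  have eigen_of_pointwise : (∃ x, Φ x ≠ 0) →
      ∃ g : Lp ℝ 2 m, g ≠ 0 ∧ ∀ t : ℝ, 0 ≤ t → T t g = Real.exp (-(t * E0)) • g :=
    fun ⟨_, hx⟩ => hp.exists_eigenvector_of_ne_zero hT.symm hT.semigroup hΦ hx
  have ae_of_eigen : (∃ g : Lp ℝ 2 m, g ≠ 0 ∧
      ∀ t : ℝ, 0 ≤ t → T t g = Real.exp (-(t * E0)) • g) → ¬ (Φ =ᵐ[m] fun _ => 0) := by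
    rintro ⟨g, hg0, heig⟩ hΦ0
    refine hg0 (Lp.eq_zero_iff_ae_eq_zero.2 ?_)
    filter_upwards [hp.ae_abs_le_mul_norm_of_eigenvector hΦ heig, hΦ0] with x hx hx0
    rw [hx0, zero_mul, abs_nonpos_iff] at hx
    exact hx
  have pointwise_of_ae : ¬ (Φ =ᵐ[m] fun _ => 0) → ∃ x, Φ x ≠ 0 := by
    contrapose!
    exact Eventually.of_forall
  exact ⟨⟨ae_of_eigen, eigen_of_pointwise ∘ pointwise_of_ae⟩,
    ⟨pointwise_of_ae, ae_of_eigen ∘ eigen_of_pointwise⟩⟩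

/-- Let `L` be a selfadjoint operator in `L²(X, m)`, bounded below, with `E0`
the infimum of the spectrum of `L`, and assume that the semigroup `(e^{-tL})_{t≥0}` has a
kernel `p` satisfying (K1), (K2), (K3). For `t > 0` and `x ∈ X` set
`Φ_t(x) := (e^{tE0} p_t(x, x))^{1/2}`, and let `Φ` be the pointwise limit of `Φ_t` as `t → ∞`
(which exists). Then the following are equivalent: (i) `E0` is an eigenvalue of `L`;
(ii) `Φ` is not the zero function in `L²(X, m)` (i.e., `Φ` is not `m`-a.e. zero);
(iii) there exists `x ∈ X` with `Φ(x) ≠ 0`. -/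
theorem statement11 {X : Type*} [MeasurableSpace X] (m : Measure X) [SigmaFinite m]
    (T : ℝ → Lp ℝ 2 m →L[ℝ] Lp ℝ 2 m) (ρ : Lp ℝ 2 m → Measure ℝ) (E0 : ℝ)
    (hT : IsHeatSemigroupOf T ρ E0)
    (p : ℝ → X → X → ℝ) (hp : IsKernelOf m T p)
    (Φ : X → ℝ)
    (hΦ : ∀ x : X, Tendsto (fun t : ℝ => Real.sqrt (Real.exp (t * E0) * p t x x))
      atTop (𝓝 (Φ x))) :
    ((∃ g : Lp ℝ 2 m, g ≠ 0 ∧ ∀ t : ℝ, 0 ≤ t → T t g = Real.exp (-(t * E0)) • g) ↔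
      ¬ (Φ =ᵐ[m] (fun _ => 0))) ∧
    ((¬ (Φ =ᵐ[m] (fun _ => 0))) ↔ ∃ x : X, Φ x ≠ 0) :=
  statement11_general m T ρ E0 hT p hp Φ hΦ
end
end
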